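/- For every integer m ≥ 2 and every ε > 0 there exists a simple closed polygon with exactly 2m+1 vertices in EuclideanSpace ℝ (Fin 3) whose total curvature Σ_{i=0}^{2m} angle(v_{i+1} − v_i, v_{i+2} − v_{i+1}) (indices mod 2m+1) is strictly greater than 2mπ − ε. In other words, the bound 2mπ for the total curvature of a piecewise geodesic Jordan curve with 2m+1 vertices is sharp. -/

import Mathlib

/-!
Take the zigzag `p j = (j mod 2, y j, j t)`, `0 ≤ j ≤ 2m`, with `y j = -t` at the two ends and
`y j = 0` otherwise, and close it up by the vertical edge `[p (2m), p 0]`. The height `j t`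
increases strictly along the zigzag, which separates its non-adjacent edges, and the closing edge
lies in the plane `y = -t`, away from the interior edges, which lie in `y = 0`.
As `t → 0` the edge directions of the zigzag tend alternately to `±e₀`, so each of the
`2m - 1` exterior angles at its interior vertices tends to `π`; the two exterior angles at the
closing edge are at least `π / 2` because the inner products of the adjacent edge vectors there
are `-2m t² ≤ 0`.
-/

open Real InnerProductGeometry

/-- A closed polygon with vertices `v i` (indices cyclic, consecutive vertices distinct)
is simple (a piecewise geodesic Jordan curve) if any two consecutive edges meet exactly
in their common vertex and any two non-consecutive edges are disjoint. -/
def IsSimpleClosedPolygon {k n : ℕ} (v : ZMod k → EuclideanSpace ℝ (Fin n)) : Prop :=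
  (∀ i, v (i + 1) ≠ v i) ∧
  (∀ i, segment ℝ (v i) (v (i + 1)) ∩ segment ℝ (v (i + 1)) (v (i + 2)) = {v (i + 1)}) ∧
  (∀ i j, i ≠ j → i + 1 ≠ j → i ≠ j + 1 →
    Disjoint (segment ℝ (v i) (v (i + 1))) (segment ℝ (v j) (v (j + 1))))

open Filter Topology Set
open scoped RealInnerProductSpace

section Segment

variable {E : Type*} [AddCommGroup E] [Module ℝ E] (f : E →ₗ[ℝ] ℝ) {a b c d x : E}

lemma LinearMap.apply_mem_uIcc_of_mem_segment (hx : x ∈ segment ℝ a b) :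
    f x ∈ uIcc (f a) (f b) := by
  rw [← segment_eq_uIcc]
  exact image_segment ℝ f.toAffineMap a b ▸ mem_image_of_mem _ hx

lemma disjoint_segment_of_max_lt_min (h : max (f a) (f b) < min (f c) (f d)) :
    Disjoint (segment ℝ a b) (segment ℝ c d) :=
  Set.disjoint_left.2 fun _ hab hcd =>
    (h.trans_le (f.apply_mem_uIcc_of_mem_segment hcd).1).not_ge
      (f.apply_mem_uIcc_of_mem_segment hab).2

lemma eq_right_of_mem_segment_of_apply_eq (hab : f a ≠ f b) (hx : x ∈ segment ℝ a b)
    (hfx : f x = f b) : x = b := by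
  obtain ⟨s, t, -, -, hst, rfl⟩ := hx
  obtain rfl : s = 1 - t := by linarith
  simp only [map_add, map_smul, smul_eq_mul] at hfx
  obtain rfl : t = 1 := by
    by_contra ht
    exact hab (mul_left_cancel₀ (sub_ne_zero.2 (Ne.symm ht)) (by linarith))
  simp

lemma segment_inter_segment_eq_singleton (hab : f a ≤ f b) (hbc : f b ≤ f c)
    (h : f a < f b ∨ f b < f c) : segment ℝ a b ∩ segment ℝ b c = {b} := by
  refine subset_antisymm (fun x ⟨hx₁, hx₂⟩ => ?_)
    (by simp [right_mem_segment, left_mem_segment])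
  have hfx : f x = f b := le_antisymm
    (by simpa [hab] using (f.apply_mem_uIcc_of_mem_segment hx₁).2)
    (by simpa [hbc] using (f.apply_mem_uIcc_of_mem_segment hx₂).1)
  rcases h with h | h
  · exact eq_right_of_mem_segment_of_apply_eq f h.ne hx₁ hfx
  · exact eq_right_of_mem_segment_of_apply_eq f h.ne' (segment_symm ℝ b c ▸ hx₂) hfx

end Segment

section Angle

variable {V : Type*} [NormedAddCommGroup V] [InnerProductSpace ℝ V]

lemma InnerProductGeometry.pi_div_two_le_angle_of_inner_nonpos {x y : V} (h : ⟪x, y⟫ ≤ 0) :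
    π / 2 ≤ angle x y := by
  rw [angle, arccos, le_sub_self_iff, arcsin_nonpos]
  exact div_nonpos_of_nonpos_of_nonneg h (by positivity)

lemma InnerProductGeometry.tendsto_angle_of_tendsto_neg {α : Type*} {l : Filter α}
    {f g : α → V} {u : V} (hu : u ≠ 0) (hf : Tendsto f l (𝓝 u))
    (hg : Tendsto g l (𝓝 (-u))) :
    Tendsto (fun x => angle (f x) (g x)) l (𝓝 π) := by
  have := (continuousAt_angle (x := (u, -u)) hu (neg_ne_zero.2 hu)).tendsto.comp
    (hf.prodMk_nhds hg)
  rwa [angle_self_neg_of_nonzero hu] at this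

end Angle

noncomputable def totalCurvature {V : Type*} [NormedAddCommGroup V] [InnerProductSpace ℝ V]
    {k : ℕ} [NeZero k] (v : ZMod k → V) : ℝ :=
  ∑ i, angle (v (i + 1) - v i) (v (i + 2) - v (i + 1))

section ClosedChain

variable {α : Type*} {N : ℕ}

def closedChain (N : ℕ) (P : ℕ → α) : ZMod (N + 1) → α := fun i => P i.val

lemma closedChain_natCast (P : ℕ → α) {k : ℕ} (hk : k ≤ N) : closedChain N P k = P k := by
  rw [closedChain, ZMod.val_cast_of_lt (Nat.lt_succ_of_le hk)]

lemma closedChain_natCast_add_one (P : ℕ → α) {a : ℕ} (h : a + 1 ≤ N) :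
    closedChain N P (a + 1) = P (a + 1) :=
  mod_cast closedChain_natCast P h

lemma closedChain_natCast_add_two (P : ℕ → α) {a : ℕ} (h : a + 2 ≤ N) :
    closedChain N P (a + 2) = P (a + 2) :=
  mod_cast closedChain_natCast P h

lemma ZMod.exists_natCast_eq (i : ZMod (N + 1)) : ∃ a ≤ N, (a : ZMod (N + 1)) = i :=
  ⟨i.val, Nat.le_of_lt_succ (ZMod.val_lt i), ZMod.natCast_zmod_val i⟩

lemma closedChain_natCast_self_add_one (P : ℕ → α) : closedChain N P (N + 1) = P 0 := by
  rw [ZMod.natCast_self', closedChain, ZMod.val_zero]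

lemma closedChain_natCast_self_add_two (P : ℕ → α) (hN : 1 ≤ N) :
    closedChain N P (N + 2) = P 1 := by
  rw [show (N : ZMod (N + 1)) + 2 = (1 : ℕ) by
    rw [Nat.cast_one, ← one_add_one_eq_two, ← add_assoc, ZMod.natCast_self', zero_add]]
  exact closedChain_natCast P hN

lemma closedChain_natCast_add_two_of_add_one_eq (P : ℕ → α) {a : ℕ} (h : a + 1 = N) :
    closedChain N P (a + 2) = P 0 := by
  subst h
  rw [show (a : ZMod (a + 1 + 1)) + 2 = (a + 1 : ℕ) + 1 by push_cast; ring,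
    closedChain_natCast_self_add_one]

lemma closedChain_add_one_ne {P : ℕ → α} (hne : ∀ a < N, P (a + 1) ≠ P a)
    (hne_last : P 0 ≠ P N) (i : ZMod (N + 1)) :
    closedChain N P (i + 1) ≠ closedChain N P i := by
  obtain ⟨a, ha, rfl⟩ := ZMod.exists_natCast_eq i
  rcases ha.lt_or_eq with ha | rfl
  · rw [closedChain_natCast_add_one P ha, closedChain_natCast P ha.le]
    exact hne a ha
  · rw [closedChain_natCast_self_add_one, closedChain_natCast P le_rfl]
    exact hne_last

variable {E : Type*} [AddCommGroup E] [Module ℝ E]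

lemma segment_inter_segment_closedChain {P : ℕ → E} (hN : 1 ≤ N)
    (hadj : ∀ a, a + 2 ≤ N →
      segment ℝ (P a) (P (a + 1)) ∩ segment ℝ (P (a + 1)) (P (a + 2)) = {P (a + 1)})
    (hadj_last : segment ℝ (P (N - 1)) (P N) ∩ segment ℝ (P N) (P 0) = {P N})
    (hadj_first : segment ℝ (P N) (P 0) ∩ segment ℝ (P 0) (P 1) = {P 0}) (i : ZMod (N + 1)) :
    segment ℝ (closedChain N P i) (closedChain N P (i + 1)) ∩
      segment ℝ (closedChain N P (i + 1)) (closedChain N P (i + 2)) =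
        {closedChain N P (i + 1)} := by
  obtain ⟨a, ha, rfl⟩ := ZMod.exists_natCast_eq i
  rcases eq_or_lt_of_le ha with rfl | ha
  · rw [closedChain_natCast P le_rfl, closedChain_natCast_self_add_one,
      closedChain_natCast_self_add_two P hN]
    exact hadj_first
  rcases eq_or_lt_of_le (Nat.succ_le_of_lt ha) with rfl | ha
  · rw [closedChain_natCast P ha.le, closedChain_natCast_add_one P le_rfl,
      closedChain_natCast_add_two_of_add_one_eq P rfl]
    simpa using hadj_last
  · rw [closedChain_natCast P (by omega), closedChain_natCast_add_one P (by omega),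
      closedChain_natCast_add_two P ha]
    exact hadj a ha

lemma disjoint_segment_closedChain {P : ℕ → E}
    (hdisj : ∀ a b, a + 2 ≤ b → b < N →
      Disjoint (segment ℝ (P a) (P (a + 1))) (segment ℝ (P b) (P (b + 1))))
    (hdisj_last : ∀ b, 1 ≤ b → b + 2 ≤ N →
      Disjoint (segment ℝ (P N) (P 0)) (segment ℝ (P b) (P (b + 1))))
    (i j : ZMod (N + 1)) (hij : i ≠ j) (hij₁ : i + 1 ≠ j) (hji₁ : i ≠ j + 1) :
    Disjoint (segment ℝ (closedChain N P i) (closedChain N P (i + 1)))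
      (segment ℝ (closedChain N P j) (closedChain N P (j + 1))) := by
  have cast_ne {x y : ℕ} (h : (x : ZMod (N + 1)) ≠ y) : x ≠ y := mt (congrArg _) h
  obtain ⟨a, ha, rfl⟩ := ZMod.exists_natCast_eq i
  obtain ⟨b, hb, rfl⟩ := ZMod.exists_natCast_eq j
  have hab := cast_ne hij
  rcases eq_or_lt_of_le ha with rfl | ha <;> rcases eq_or_lt_of_le hb with rfl | hb
  · exact absurd rfl hab
  · rw [closedChain_natCast_self_add_one, closedChain_natCast P le_rfl,
      closedChain_natCast P hb.le, closedChain_natCast_add_one P hb]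
    rw [ZMod.natCast_self'] at hij₁
    have hb₀ := cast_ne (x := 0) (by simpa using hij₁)
    have hb₁ := cast_ne (x := b + 1) (by simpa using hji₁.symm)
    exact hdisj_last b (by omega) (by omega)
  · rw [closedChain_natCast_self_add_one, closedChain_natCast P le_rfl,
      closedChain_natCast P ha.le, closedChain_natCast_add_one P ha]
    rw [ZMod.natCast_self'] at hji₁
    have ha₀ := cast_ne (x := 0) (by simpa using hji₁.symm)
    have ha₁ := cast_ne (x := a + 1) (by simpa using hij₁)
    exact (hdisj_last a (by omega) (by omega)).symm
  · rw [closedChain_natCast P ha.le, closedChain_natCast_add_one P ha,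
      closedChain_natCast P hb.le, closedChain_natCast_add_one P hb]
    have ha₁ := cast_ne (x := a + 1) (by simpa using hij₁)
    have hb₁ := cast_ne (x := b + 1) (by simpa using hji₁.symm)
    rcases lt_or_gt_of_ne hab with h | h
    · exact hdisj a b (by omega) hb
    · exact (hdisj b a (by omega) ha).symm

lemma ZMod.sum_univ_eq_sum_range {M : Type*} [AddCommMonoid M] (F : ZMod (N + 1) → M) :
    ∑ i, F i = ∑ a ∈ Finset.range (N + 1), F a :=
  Finset.sum_nbij' ZMod.val Nat.cast (fun i _ => Finset.mem_range.2 (ZMod.val_lt i)) (by simp)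
    (by simp) (fun a ha => ZMod.val_cast_of_lt (Finset.mem_range.1 ha)) (by simp)

theorem totalCurvature_closedChain {V : Type*} [NormedAddCommGroup V] [InnerProductSpace ℝ V]
    (hN : 1 ≤ N) (P : ℕ → V) :
    totalCurvature (closedChain N P) =
      ∑ a ∈ Finset.range (N - 1), angle (P (a + 1) - P a) (P (a + 2) - P (a + 1)) +
        angle (P N - P (N - 1)) (P 0 - P N) + angle (P 0 - P N) (P 1 - P 0) := by
  obtain ⟨M, rfl⟩ : ∃ M, N = M + 1 := ⟨N - 1, by omega⟩
  rw [totalCurvature, ZMod.sum_univ_eq_sum_range, Finset.sum_range_succ, Finset.sum_range_succ,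
    Nat.add_sub_cancel]
  refine congrArg₂ (· + ·) (congrArg₂ (· + ·) (Finset.sum_congr rfl fun a ha => ?_) ?_) ?_
  · have := Finset.mem_range.1 ha
    rw [closedChain_natCast P (by omega), closedChain_natCast_add_one P (by omega),
      closedChain_natCast_add_two P (by omega)]
  · rw [show (M : ZMod (M + 1 + 1)) + 2 = (M + 1 : ℕ) + 1 by push_cast; ring,
      closedChain_natCast_self_add_one, closedChain_natCast P (by omega),
      closedChain_natCast_add_one P le_rfl]
  · rw [closedChain_natCast_self_add_one, closedChain_natCast_self_add_two P hN,
      closedChain_natCast P le_rfl]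

end ClosedChain

section Zigzag

variable {N : ℕ} {t : ℝ}

noncomputable def zigzag (N : ℕ) (t : ℝ) (j : ℕ) : EuclideanSpace ℝ (Fin 3) :=
  !₂[(j % 2 : ℕ), if j = 0 ∨ j = N then -t else 0, j * t]

lemma continuous_zigzag (N j : ℕ) : Continuous fun t => zigzag N t j := by
  unfold zigzag; split_ifs <;> fun_prop

lemma zigzag_zero (N j : ℕ) :
    zigzag N 0 j = (!₂[((j % 2 : ℕ) : ℝ), 0, 0] : EuclideanSpace ℝ (Fin 3)) := by
  simp [zigzag]

lemma zigzag_apply_one (j : ℕ) : zigzag N t j 1 = if j = 0 ∨ j = N then -t else 0 := by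
  simp [zigzag]

lemma projₗ_two_zigzag (j : ℕ) : EuclideanSpace.projₗ 2 (zigzag N t j) = j * t := by
  simp [zigzag]

lemma strictMono_projₗ_two_zigzag (ht : 0 < t) :
    StrictMono fun j => EuclideanSpace.projₗ 2 (zigzag N t j) := fun a b h => by
  simpa only [projₗ_two_zigzag] using mul_lt_mul_of_pos_right (Nat.cast_lt.2 h) ht

lemma zigzag_injective (ht : 0 < t) : Function.Injective (zigzag N t) :=
  fun _ _ h => (strictMono_projₗ_two_zigzag ht).injective (congrArg (EuclideanSpace.projₗ 2) h)

theorem isSimpleClosedPolygon_zigzag (hN : 2 ≤ N) (ht : 0 < t) :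
    IsSimpleClosedPolygon (closedChain N (zigzag N t)) := by
  have hz := strictMono_projₗ_two_zigzag (N := N) ht
  refine ⟨closedChain_add_one_ne (fun _ _ => (zigzag_injective ht).ne (by omega))
      ((zigzag_injective ht).ne (by omega)),
    segment_inter_segment_closedChain (by omega) (fun a _ => ?_) ?_ ?_,
    disjoint_segment_closedChain (fun a b hab _ => ?_) (fun b hb hbN => ?_)⟩
  · exact segment_inter_segment_eq_singleton _ (hz.monotone (by omega)) (hz.monotone (by omega))
      (.inl (hz (by omega)))
  · refine segment_inter_segment_eq_singleton (-EuclideanSpace.projₗ 1) ?_ ?_ ?_ <;>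
      simp [zigzag_apply_one, ht, ht.le, show N - 1 ≠ 0 by omega, show N - 1 ≠ N by omega]
  · refine segment_inter_segment_eq_singleton (EuclideanSpace.projₗ 1) ?_ ?_ ?_ <;>
      simp [zigzag_apply_one, ht, ht.le, show 1 ≠ N by omega]
  · exact disjoint_segment_of_max_lt_min (EuclideanSpace.projₗ 2)
      (max_lt (lt_min (hz (by omega)) (hz (by omega))) (lt_min (hz (by omega)) (hz (by omega))))
  · refine disjoint_segment_of_max_lt_min (EuclideanSpace.projₗ 1) ?_
    simp [zigzag_apply_one, ht, show b ≠ 0 by omega, show b ≠ N by omega,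
      show b + 1 ≠ N by omega]

lemma tendsto_angle_zigzag (N j : ℕ) :
    Tendsto (fun t => angle (zigzag N t (j + 1) - zigzag N t j)
      (zigzag N t (j + 2) - zigzag N t (j + 1))) (𝓝 0) (𝓝 π) := by
  have hedge (k : ℕ) : Tendsto (fun t => zigzag N t (k + 1) - zigzag N t k) (𝓝 0)
      (𝓝 (zigzag N 0 (k + 1) - zigzag N 0 k)) :=
    ((continuous_zigzag N _).sub (continuous_zigzag N _)).tendsto 0
  refine tendsto_angle_of_tendsto_neg ?_ (hedge j) ?_
  · intro h
    have := congrArg (fun v : EuclideanSpace ℝ (Fin 3) => v 0) h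
    simp [zigzag_zero, sub_eq_zero] at this
    omega
  · have hneg : zigzag N 0 (j + 2) - zigzag N 0 (j + 1) =
        -(zigzag N 0 (j + 1) - zigzag N 0 j) := by
      rw [zigzag_zero, zigzag_zero, zigzag_zero]
      ext k
      fin_cases k <;> simp [Nat.add_mod]
    exact hneg ▸ hedge (j + 1)

lemma pi_div_two_le_angle_zigzag_last (hN : 2 ≤ N) (heven : Even N) :
    π / 2 ≤ angle (zigzag N t N - zigzag N t (N - 1)) (zigzag N t 0 - zigzag N t N) := by
  apply pi_div_two_le_angle_of_inner_nonpos
  simp [zigzag, PiLp.inner_apply, Fin.sum_univ_three, Nat.even_iff.1 heven,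
    Nat.cast_sub (by omega : 1 ≤ N), show N - 1 ≠ 0 by omega, show N - 1 ≠ N by omega]
  ring_nf
  positivity

lemma pi_div_two_le_angle_zigzag_first (hN : 2 ≤ N) (heven : Even N) :
    π / 2 ≤ angle (zigzag N t 0 - zigzag N t N) (zigzag N t 1 - zigzag N t 0) := by
  apply pi_div_two_le_angle_of_inner_nonpos
  simp [zigzag, PiLp.inner_apply, Fin.sum_univ_three, Nat.even_iff.1 heven, show 1 ≠ N by omega]
  ring_nf
  positivity

theorem exists_pos_lt_totalCurvature_zigzag (hN : 2 ≤ N) (heven : Even N) {ε : ℝ}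
    (hε : 0 < ε) :
    ∃ t > 0, N * π - ε < totalCurvature (closedChain N (zigzag N t)) := by
  have hlim := (tendsto_finsetSum (Finset.range (N - 1)) fun a _ =>
    tendsto_angle_zigzag N a).mono_left (nhdsWithin_le_nhds (s := Ioi 0))
  rw [Finset.sum_const, Finset.card_range, nsmul_eq_mul] at hlim
  obtain ⟨t, hS, ht⟩ :=
    ((hlim.eventually (lt_mem_nhds (sub_lt_self _ hε))).and self_mem_nhdsWithin).exists
  refine ⟨t, ht, ?_⟩
  rw [totalCurvature_closedChain (by omega)]
  have := pi_div_two_le_angle_zigzag_last (t := t) hN heven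
  have := pi_div_two_le_angle_zigzag_first (t := t) hN heven
  rw [Nat.cast_sub (by omega), Nat.cast_one] at hS
  linarith

end Zigzag

/-- Sharpness of the bound `2mπ`: for every `m ≥ 2` and `ε > 0` there is a
piecewise geodesic Jordan curve with `2m+1` vertices in `ℝ³` of total curvature
greater than `2mπ - ε`. -/
theorem total_curvature_gamma_odd_sharp (m : ℕ) (hm : 2 ≤ m) (ε : ℝ) (hε : 0 < ε) :
    ∃ v : ZMod (2 * m + 1) → EuclideanSpace ℝ (Fin 3),
      IsSimpleClosedPolygon v ∧
      2 * m * Real.pi - ε <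
        ∑ i : ZMod (2 * m + 1), angle (v (i + 1) - v i) (v (i + 2) - v (i + 1)) := by
  obtain ⟨t, ht, hcurv⟩ := exists_pos_lt_totalCurvature_zigzag (by omega) (even_two_mul m) hε
  exact ⟨closedChain (2 * m) (zigzag (2 * m) t), isSimpleClosedPolygon_zigzag (by omega) ht,
    mod_cast hcurv⟩
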